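/- arXiv:2302.12658 — 3 statements merged into one kernel-verified Lean document; each statement's English description precedes it below -/
import Mathlib

section
/- Let r ≥ 1 and 0 ≤ a ≤ r be integers, and let S ⊆ ℂ^{r−a} be a subset whose ℂ-linear span is all of ℂ^{r−a}. If a polynomial P ∈ ℂ[w_1, …, w_{r+1}] satisfies σ_b(P) = P for every b ∈ S, then P lies in the subring ℂ[w_{r−a+1}, …, w_{r+1}]; that is, no monomial of P involves any of the variables w_1, …, w_{r−a}. -/
open MvPolynomial

/-- The "shear" substitution `σ_b` on `ℂ[w_1, …, w_{r+1}]` determined by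
`w_i ↦ w_i + b_i · w_{r+1}` for the first `r - a` variables and fixing the remaining ones. -/
noncomputable def shear (r a : ℕ) (b : Fin (r - a) → ℂ) :
    MvPolynomial (Fin (r + 1)) ℂ →ₐ[ℂ] MvPolynomial (Fin (r + 1)) ℂ :=
  aeval fun i : Fin (r + 1) =>
    if h : (i : ℕ) < r - a then
      X i + C (b ⟨(i : ℕ), h⟩) * X (Fin.last r)
    else X i

lemma not_last_lt (r a : ℕ) : ¬ (((Fin.last r : Fin (r+1)) : ℕ) < r - a) := by
  simp only [Fin.val_last]
  omega

lemma shear_comp (r a : ℕ) (b b' : Fin (r - a) → ℂ) (P : MvPolynomial (Fin (r+1)) ℂ) :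
    shear r a b (shear r a b' P) = shear r a (b + b') P := by
  have h : (shear r a b).comp (shear r a b') = shear r a (b + b') := by
    apply MvPolynomial.algHom_ext
    intro i
    simp only [AlgHom.comp_apply, shear, aeval_X]
    by_cases h : (i : ℕ) < r - a
    · rw [dif_pos h, dif_pos h, map_add, map_mul, aeval_X, aeval_X, aeval_C,
        dif_pos h, dif_neg (not_last_lt r a), algebraMap_eq, Pi.add_apply, map_add]
      ring
    · rw [dif_neg h, dif_neg h, aeval_X, dif_neg h]
  calc shear r a b (shear r a b' P) = (shear r a b).comp (shear r a b') P := rfl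
    _ = shear r a (b + b') P := by rw [h]

lemma eval_aeval' {n : ℕ} (x : Fin n → ℂ) (g : Fin n → MvPolynomial (Fin n) ℂ)
    (P : MvPolynomial (Fin n) ℂ) :
    eval x (aeval g P) = eval (fun i : Fin n => eval x (g i)) P := by
  induction P using MvPolynomial.induction_on with
  | C c => simp only [aeval_C, algebraMap_eq, eval_C]
  | add p q hp hq => simp only [map_add, hp, hq]
  | mul_X p i hp => simp only [map_mul, aeval_X, eval_mul, hp, eval_X]

lemma peval_aeval {n : ℕ} (t : ℂ) (g : Fin n → Polynomial ℂ)
    (P : MvPolynomial (Fin n) ℂ) :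
    Polynomial.eval t (aeval g P) = eval (fun i : Fin n => (g i).eval t) P := by
  induction P using MvPolynomial.induction_on with
  | C c => simp
  | add p q hp hq => simp only [map_add, Polynomial.eval_add, hp, hq]
  | mul_X p i hp => simp only [map_mul, aeval_X, eval_mul, Polynomial.eval_mul, hp, eval_X]

lemma eval_shear (r a : ℕ) (b : Fin (r - a) → ℂ) (x : Fin (r+1) → ℂ)
    (P : MvPolynomial (Fin (r+1)) ℂ) :
    eval x (shear r a b P)
      = eval (fun i : Fin (r+1) =>
          if h : (i : ℕ) < r - a then x i + b ⟨(i : ℕ), h⟩ * x (Fin.last r) else x i) P := by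
  rw [shear, eval_aeval']
  refine congrArg (fun y : Fin (r+1) → ℂ => eval y P) ?_
  funext i
  by_cases h : (i : ℕ) < r - a
  · rw [dif_pos h, dif_pos h]; simp
  · rw [dif_neg h, dif_neg h, eval_X]

lemma shear_zero (r a : ℕ) (P : MvPolynomial (Fin (r+1)) ℂ) : shear r a 0 P = P := by
  have h : shear r a 0 = AlgHom.id ℂ (MvPolynomial (Fin (r+1)) ℂ) := by
    apply MvPolynomial.algHom_ext
    intro i
    simp only [shear, aeval_X, AlgHom.coe_id, id_eq]
    by_cases h : (i : ℕ) < r - a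
    · rw [dif_pos h]; simp
    · rw [dif_neg h]
  rw [h]; rfl

/-- If `P ∈ ℂ[w_1, …, w_{r+1}]` is invariant under the shear `σ_b` for every `b` in a spanning
subset `S ⊆ ℂ^{r-a}`, then `P` only involves the last `a + 1` variables
`w_{r-a+1}, …, w_{r+1}`. -/
theorem invariant_poly_mem_supported_last_vars
    (r a : ℕ) (hr : 1 ≤ r) (har : a ≤ r)
    (S : Set (Fin (r - a) → ℂ))
    (hS : Submodule.span ℂ S = ⊤)
    (P : MvPolynomial (Fin (r + 1)) ℂ)
    (hP : ∀ b ∈ S, shear r a b P = P) :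
    P ∈ MvPolynomial.supported ℂ {i : Fin (r + 1) | r - a ≤ (i : ℕ)} := by
  -- Step 1: the set of invariant shear vectors is a submodule
  set T : Submodule ℂ (Fin (r - a) → ℂ) :=
    { carrier := {b | shear r a b P = P}
      zero_mem' := shear_zero r a P
      add_mem' := by
        intro b b' hb hb'
        show shear r a (b + b') P = P
        rw [← shear_comp, hb', hb]
      smul_mem' := by
        intro c b hb
        show shear r a (c • b) P = P
        have hnat : ∀ n : ℕ, shear r a ((n : ℂ) • b) P = P := by
          intro n
          induction n with
          | zero => simpa using shear_zero r a P
          | succ n ih =>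
            have h1 : ((n + 1 : ℕ) : ℂ) • b = (n : ℂ) • b + b := by
              push_cast; rw [add_smul, one_smul]
            rw [h1, ← shear_comp, hb, ih]
        apply MvPolynomial.funext
        intro x
        rw [eval_shear]
        set q : Polynomial ℂ := aeval (fun i : Fin (r+1) =>
          if h : (i : ℕ) < r - a then
            Polynomial.C (x i) + Polynomial.C (b ⟨(i : ℕ), h⟩ * x (Fin.last r)) * Polynomial.X
          else Polynomial.C (x i)) P with hqdef
        have hq : ∀ t : ℂ, q.eval t
            = eval (fun i : Fin (r+1) =>
                if h : (i : ℕ) < r - a then x i + (t • b) ⟨(i : ℕ), h⟩ * x (Fin.last r)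
                else x i) P := by
          intro t
          rw [hqdef, peval_aeval]
          refine congrArg (fun y : Fin (r+1) → ℂ => eval y P) ?_
          funext i
          by_cases h : (i : ℕ) < r - a
          · rw [dif_pos h, dif_pos h]
            simp [Pi.smul_apply, smul_eq_mul]
            ring
          · rw [dif_neg h, dif_neg h, Polynomial.eval_C]
        have hconst : ∀ n : ℕ, q.eval (n : ℂ) = eval x P := by
          intro n
          rw [hq]
          conv_rhs => rw [← hnat n]
          rw [eval_shear]
        have hzero : q - Polynomial.C (eval x P) = 0 := by
          apply Polynomial.eq_zero_of_infinite_isRoot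
          refine Set.Infinite.mono ?_
            (Set.infinite_range_of_injective (Nat.cast_injective (R := ℂ)))
          rintro _ ⟨n, rfl⟩
          simp [Polynomial.IsRoot, hconst n]
        have hqc : q = Polynomial.C (eval x P) := by
          have := sub_eq_zero.mp hzero; exact this
        calc eval (fun i : Fin (r+1) =>
              if h : (i : ℕ) < r - a then x i + (c • b) ⟨(i : ℕ), h⟩ * x (Fin.last r)
              else x i) P = q.eval c := (hq c).symm
          _ = eval x P := by rw [hqc, Polynomial.eval_C] }
    with hTdef
  have hall : ∀ b : Fin (r - a) → ℂ, shear r a b P = P := by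
    intro b
    have hle : Submodule.span ℂ S ≤ T := Submodule.span_le.mpr (fun s hs => hP s hs)
    rw [hS] at hle
    exact hle (Submodule.mem_top (x := b))
  -- Step 2: P equals its image under setting the first r-a variables to 0
  set ε : MvPolynomial (Fin (r+1)) ℂ →ₐ[ℂ] MvPolynomial (Fin (r+1)) ℂ :=
    aeval (fun i : Fin (r+1) => if (i : ℕ) < r - a then 0 else X i) with hεdef
  have heval : ∀ x : Fin (r+1) → ℂ, eval x (ε P)
      = eval (fun i : Fin (r+1) => if (i : ℕ) < r - a then 0 else x i) P := by
    intro x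
    rw [hεdef, eval_aeval']
    refine congrArg (fun y : Fin (r+1) → ℂ => eval y P) ?_
    funext i
    by_cases h : (i : ℕ) < r - a
    · simp [h]
    · simp [h]
  have hkey : P = ε P := by
    have hz : X (Fin.last r) * (P - ε P) = 0 := by
      apply MvPolynomial.funext
      intro x
      rw [map_mul, map_sub, eval_X, map_zero]
      by_cases hx : x (Fin.last r) = 0
      · rw [hx, zero_mul]
      · have : eval x P = eval x (ε P) := by
          set b : Fin (r - a) → ℂ := fun j =>
            - x ⟨(j : ℕ), by omega⟩ / x (Fin.last r) with hbdef
          conv_lhs => rw [← hall b, eval_shear]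
          rw [heval]
          refine congrArg (fun y : Fin (r+1) → ℂ => eval y P) ?_
          funext i
          by_cases h : (i : ℕ) < r - a
          · rw [dif_pos h, if_pos h]
            show x i + -x i / x (Fin.last r) * x (Fin.last r) = 0
            field_simp
            ring
          · rw [dif_neg h, if_neg h]
        rw [this, sub_self, mul_zero]
    have h2 : P - ε P = 0 := by
      rcases mul_eq_zero.mp hz with h | h
      · exact absurd h (MvPolynomial.X_ne_zero _)
      · exact h
    exact sub_eq_zero.mp h2
  -- Step 3: ε P is supported on the last variables
  have hmem : ∀ Q : MvPolynomial (Fin (r+1)) ℂ,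
      ε Q ∈ MvPolynomial.supported ℂ {i : Fin (r + 1) | r - a ≤ (i : ℕ)} := by
    intro Q
    induction Q using MvPolynomial.induction_on with
    | C c =>
      rw [hεdef, aeval_C]
      exact Subalgebra.algebraMap_mem _ c
    | add p q hp hq => rw [map_add]; exact Subalgebra.add_mem _ hp hq
    | mul_X p i hp =>
      rw [map_mul]
      refine Subalgebra.mul_mem _ hp ?_
      rw [hεdef, aeval_X]
      by_cases h : (i : ℕ) < r - a
      · rw [if_pos h]; exact Subalgebra.zero_mem _
      · rw [if_neg h]
        exact (MvPolynomial.X_mem_supported (R := ℂ)).mpr (by simpa using Nat.le_of_not_lt h)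
  rw [hkey]
  exact hmem P
end

section
/- Let r ≥ 1, 0 ≤ a ≤ r and k ≥ 0 be integers, and let S ⊆ ℂ^{r−a} be a subset whose ℂ-linear span is all of ℂ^{r−a}. Then the ℂ-vector space of homogeneous degree-k polynomials P ∈ ℂ[w_1, …, w_{r+1}] satisfying σ_b(P) = P for every b ∈ S has dimension equal to the binomial coefficient C(k + a, a) (the number of degree-k monomials in the a+1 variables w_{r−a+1}, …, w_{r+1}). -/
open MvPolynomial

/-- The space of homogeneous degree-`k` polynomials in `ℂ[w_1, …, w_{r+1}]` invariant under
the shear `σ_b` for every `b ∈ S`. -/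
noncomputable def invariantHomogeneous (r a k : ℕ) (S : Set (Fin (r - a) → ℂ)) :
    Submodule ℂ (MvPolynomial (Fin (r + 1)) ℂ) :=
  homogeneousSubmodule (Fin (r + 1)) ℂ k ⊓
    ⨅ b ∈ S, LinearMap.eqLocus (shear r a b).toLinearMap LinearMap.id

/-- The corresponding shift on points. -/
def shearShift (r a : ℕ) (c : Fin (r - a) → ℂ) (x : Fin (r + 1) → ℂ) : Fin (r + 1) → ℂ :=
  fun i => if h : (i : ℕ) < r - a then x i + c ⟨(i : ℕ), h⟩ * x (Fin.last r) else x i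

lemma shearShift_last (r a : ℕ) (c : Fin (r - a) → ℂ) (x : Fin (r + 1) → ℂ) :
    shearShift r a c x (Fin.last r) = x (Fin.last r) := by
  have : ¬ ((Fin.last r : ℕ) < r - a) := by simp
  simp [shearShift, this]

lemma shearShift_zero (r a : ℕ) (x : Fin (r + 1) → ℂ) : shearShift r a 0 x = x := by
  funext i; simp [shearShift]

lemma shearShift_pos (r a : ℕ) (c : Fin (r - a) → ℂ) (x : Fin (r + 1) → ℂ) (i : Fin (r + 1))
    (h : (i : ℕ) < r - a) :
    shearShift r a c x i = x i + c ⟨(i : ℕ), h⟩ * x (Fin.last r) := dif_pos h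

lemma shearShift_neg (r a : ℕ) (c : Fin (r - a) → ℂ) (x : Fin (r + 1) → ℂ) (i : Fin (r + 1))
    (h : ¬ (i : ℕ) < r - a) :
    shearShift r a c x i = x i := dif_neg h

lemma shearShift_add (r a : ℕ) (c c' : Fin (r - a) → ℂ) (x : Fin (r + 1) → ℂ) :
    shearShift r a (c + c') x = shearShift r a c (shearShift r a c' x) := by
  funext i
  by_cases h : (i : ℕ) < r - a
  · rw [shearShift_pos r a (c + c') x i h, shearShift_pos r a c _ i h,
      shearShift_pos r a c' x i h, shearShift_last, Pi.add_apply]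
    ring
  · rw [shearShift_neg r a (c + c') x i h, shearShift_neg r a c _ i h,
      shearShift_neg r a c' x i h]

lemma mv_aeval_self {σ : Type*} (x : σ → ℂ) (p : MvPolynomial σ ℂ) :
    aeval x p = eval x p := rfl

lemma eval_shear_s3 (r a : ℕ) (b : Fin (r - a) → ℂ) (P : MvPolynomial (Fin (r + 1)) ℂ)
    (x : Fin (r + 1) → ℂ) :
    eval x (shear r a b P) = eval (shearShift r a b x) P := by
  have key : (aeval x).comp (shear r a b) = aeval (shearShift r a b x) := by
    rw [shear, comp_aeval]
    congr 1
    funext i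
    by_cases h : (i : ℕ) < r - a <;> simp [shearShift, h, mv_aeval_self]
  have h2 := DFunLike.congr_fun key P
  simp only [AlgHom.coe_comp, Function.comp_apply, mv_aeval_self] at h2
  exact h2

lemma shearShift_smul_invariant (r a : ℕ) (P : MvPolynomial (Fin (r + 1)) ℂ)
    (c : Fin (r - a) → ℂ) (hc : ∀ x, eval (shearShift r a c x) P = eval x P) (t : ℂ) :
    ∀ x, eval (shearShift r a (t • c) x) P = eval x P := by
  have hn : ∀ n : ℕ, ∀ x, eval (shearShift r a ((n : ℂ) • c) x) P = eval x P := by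
    intro n
    induction n with
    | zero => intro x; norm_num [shearShift_zero]
    | succ n ih =>
      intro x
      have : ((n + 1 : ℕ) : ℂ) • c = c + (n : ℂ) • c := by
        push_cast
        rw [add_smul, one_smul, add_comm]
      rw [this, shearShift_add]
      rw [hc, ih]
  intro x
  set g : Fin (r + 1) → Polynomial ℂ := fun i =>
    Polynomial.C (x i) + if h : (i : ℕ) < r - a then
      Polynomial.C (c ⟨(i : ℕ), h⟩ * x (Fin.last r)) * Polynomial.X else 0 with hg
  set q : Polynomial ℂ := MvPolynomial.aeval g P - Polynomial.C (eval x P) with hq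
  have key : ∀ s : ℂ, Polynomial.eval s q = eval (shearShift r a (s • c) x) P - eval x P := by
    intro s
    have h1 : Polynomial.eval s (MvPolynomial.aeval g P)
        = MvPolynomial.aeval (fun i => Polynomial.aeval s (g i)) P := by
      have h0 := comp_aeval_apply (R := ℂ) (f := g)
        (Polynomial.aeval s : Polynomial ℂ →ₐ[ℂ] ℂ) P
      rw [← h0, Polynomial.coe_aeval_eq_eval]
    have h2 : (fun i => Polynomial.aeval s (g i)) = shearShift r a (s • c) x := by
      funext i
      by_cases h : (i : ℕ) < r - a
      · rw [shearShift_pos r a _ x i h, hg]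
        simp only [h, dif_pos]
        simp [Polynomial.coe_aeval_eq_eval]
        ring
      · rw [shearShift_neg r a _ x i h, hg]
        simp [h]
    rw [hq, Polynomial.eval_sub, Polynomial.eval_C, h1, h2, mv_aeval_self]
  have hq0 : q = 0 := by
    apply Polynomial.eq_zero_of_infinite_isRoot
    apply Set.Infinite.mono (s := Set.range ((↑) : ℕ → ℂ))
    · rintro _ ⟨n, rfl⟩
      simp only [Set.mem_setOf_eq, Polynomial.IsRoot, key, hn n x, sub_self]
    · exact Set.infinite_range_of_injective Nat.cast_injective
  have := key t
  rw [hq0, Polynomial.eval_zero] at this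
  exact sub_eq_zero.mp this.symm

lemma shearShift_all_invariant (r a : ℕ) (P : MvPolynomial (Fin (r + 1)) ℂ)
    (S : Set (Fin (r - a) → ℂ)) (hS : Submodule.span ℂ S = ⊤)
    (hP : ∀ b ∈ S, ∀ x, eval (shearShift r a b x) P = eval x P) :
    ∀ c x, eval (shearShift r a c x) P = eval x P := by
  set M : Submodule ℂ (Fin (r - a) → ℂ) :=
    { carrier := {c | ∀ x, eval (shearShift r a c x) P = eval x P}
      add_mem' := by
        intro c c' hc hc' x
        rw [shearShift_add, hc, hc']
      zero_mem' := by intro x; rw [shearShift_zero]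
      smul_mem' := by
        intro t c hc
        exact shearShift_smul_invariant r a P c hc t } with hM
  intro c
  have : c ∈ M := by
    have h1 : Submodule.span ℂ S ≤ M := Submodule.span_le.mpr (fun b hb => hP b hb)
    exact h1 (hS ▸ Submodule.mem_top)
  exact this

/-- The algebra map killing the first `r - a` variables. -/
noncomputable def zeroFirst (r a : ℕ) :
    MvPolynomial (Fin (r + 1)) ℂ →ₐ[ℂ] MvPolynomial (Fin (r + 1)) ℂ :=
  aeval fun j : Fin (r + 1) => if (j : ℕ) < r - a then 0 else X j

lemma eval_zeroFirst (r a : ℕ) (P : MvPolynomial (Fin (r + 1)) ℂ) (x : Fin (r + 1) → ℂ) :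
    eval x (zeroFirst r a P)
      = eval (fun j : Fin (r + 1) => if (j : ℕ) < r - a then 0 else x j) P := by
  have key : (aeval x).comp (zeroFirst r a)
      = aeval (fun j : Fin (r + 1) => if (j : ℕ) < r - a then 0 else x j) := by
    rw [zeroFirst, comp_aeval]
    congr 1
    funext j
    by_cases h : (j : ℕ) < r - a <;> simp [h, mv_aeval_self]
  have h2 := DFunLike.congr_fun key P
  simp only [AlgHom.coe_comp, Function.comp_apply, mv_aeval_self] at h2
  exact h2

lemma zeroFirst_eq_self (r a : ℕ) (P : MvPolynomial (Fin (r + 1)) ℂ)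
    (hP : ∀ c x, eval (shearShift r a c x) P = eval x P) :
    zeroFirst r a P = P := by
  have hmul : (X (Fin.last r) : MvPolynomial (Fin (r + 1)) ℂ) * (zeroFirst r a P - P) = 0 := by
    apply MvPolynomial.funext
    intro x
    rw [map_zero, map_mul, map_sub, eval_X]
    by_cases hx : x (Fin.last r) = 0
    · rw [hx, zero_mul]
    · set c : Fin (r - a) → ℂ :=
        fun j => - x (Fin.castLE (by omega) j) / x (Fin.last r) with hcdef
      have hshift : shearShift r a c x
          = fun j : Fin (r + 1) => if (j : ℕ) < r - a then 0 else x j := by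
        funext j
        by_cases h : (j : ℕ) < r - a
        · rw [shearShift_pos r a c x j h, if_pos h, hcdef]
          have hxx : (Fin.castLE (show r - a ≤ r + 1 by omega)
              (⟨(j : ℕ), h⟩ : Fin (r - a))) = j := rfl
          show x j + - x (Fin.castLE _ (⟨(j : ℕ), h⟩ : Fin (r - a))) / x (Fin.last r)
              * x (Fin.last r) = 0
          rw [hxx, div_mul_cancel₀ _ hx]
          ring
        · rw [shearShift_neg r a c x j h, if_neg h]
      rw [eval_zeroFirst, ← hshift, hP c x, sub_self, mul_zero]
  have hX : (X (Fin.last r) : MvPolynomial (Fin (r + 1)) ℂ) ≠ 0 := X_ne_zero _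
  have := mul_eq_zero.mp hmul
  rcases this with h | h
  · exact absurd h hX
  · exact sub_eq_zero.mp h

/-- The inclusion of the last `a + 1` indices. -/
def lastEmb (r a : ℕ) (har : a ≤ r) : Fin (a + 1) → Fin (r + 1) :=
  fun j => ⟨r - a + (j : ℕ), by omega⟩

lemma lastEmb_injective (r a : ℕ) (har : a ≤ r) : Function.Injective (lastEmb r a har) := by
  intro i j hij
  have := Fin.val_eq_of_eq hij
  simp only [lastEmb] at this
  exact Fin.ext (by omega)

/-- Projection onto the polynomial ring in the last `a+1` variables. -/
noncomputable def projLast (r a : ℕ) (har : a ≤ r) :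
    MvPolynomial (Fin (r + 1)) ℂ →ₐ[ℂ] MvPolynomial (Fin (a + 1)) ℂ :=
  aeval fun i : Fin (r + 1) =>
    if h : (i : ℕ) < r - a then 0 else X (⟨(i : ℕ) - (r - a), by omega⟩ : Fin (a + 1))

lemma rename_comp_projLast (r a : ℕ) (har : a ≤ r) :
    ((rename (lastEmb r a har) : MvPolynomial (Fin (a + 1)) ℂ →ₐ[ℂ]
        MvPolynomial (Fin (r + 1)) ℂ).comp (projLast r a har)) = zeroFirst r a := by
  apply algHom_ext
  intro i
  simp only [AlgHom.comp_apply, projLast, zeroFirst, aeval_X]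
  by_cases h : (i : ℕ) < r - a
  · simp [h]
  · rw [dif_neg h, if_neg h, rename_X]
    have : lastEmb r a har (⟨(i : ℕ) - (r - a), by omega⟩ : Fin (a + 1)) = i := by
      apply Fin.ext
      simp only [lastEmb]
      omega
    rw [this]

lemma shear_comp_rename (r a : ℕ) (har : a ≤ r) (b : Fin (r - a) → ℂ) :
    (shear r a b).comp (rename (lastEmb r a har) : MvPolynomial (Fin (a + 1)) ℂ →ₐ[ℂ]
        MvPolynomial (Fin (r + 1)) ℂ) = rename (lastEmb r a har) := by
  apply algHom_ext
  intro j
  have h : ¬ ((lastEmb r a har j : ℕ) < r - a) := by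
    simp only [lastEmb]
    omega
  simp [shear, h]

lemma invariantHomogeneous_eq (r a k : ℕ) (har : a ≤ r) (S : Set (Fin (r - a) → ℂ))
    (hS : Submodule.span ℂ S = ⊤) :
    invariantHomogeneous r a k S
      = Submodule.map (rename (lastEmb r a har) : MvPolynomial (Fin (a + 1)) ℂ →ₐ[ℂ]
          MvPolynomial (Fin (r + 1)) ℂ).toLinearMap
          (homogeneousSubmodule (Fin (a + 1)) ℂ k) := by
  apply le_antisymm
  · intro P hP
    obtain ⟨hhom, hinv⟩ := Submodule.mem_inf.mp hP
    have hinv' : ∀ b ∈ S, shear r a b P = P := by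
      intro b hb
      have := (Submodule.mem_iInf _).mp hinv b
      have := (Submodule.mem_iInf _).mp this hb
      simpa [LinearMap.mem_eqLocus] using this
    have heval : ∀ b ∈ S, ∀ x, eval (shearShift r a b x) P = eval x P := by
      intro b hb x
      rw [← eval_shear_s3, hinv' b hb]
    have hall := shearShift_all_invariant r a P S hS heval
    have hzero : zeroFirst r a P = P := zeroFirst_eq_self r a P hall
    have hPeq : P = rename (lastEmb r a har) (projLast r a har P) := by
      conv_lhs => rw [← hzero, ← rename_comp_projLast r a har]
      rfl
    refine ⟨projLast r a har P, ?_, hPeq.symm⟩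
    rw [SetLike.mem_coe, mem_homogeneousSubmodule]
    rw [← IsHomogeneous.rename_isHomogeneous_iff (lastEmb_injective r a har)]
    rw [← hPeq]
    exact (mem_homogeneousSubmodule _ _).mp hhom
  · rintro P ⟨Q, hQ, rfl⟩
    rw [invariantHomogeneous, Submodule.mem_inf]
    constructor
    · exact (mem_homogeneousSubmodule _ _).mpr
        (IsHomogeneous.rename_isHomogeneous ((mem_homogeneousSubmodule _ _).mp hQ))

    · refine (Submodule.mem_iInf _).mpr fun b => (Submodule.mem_iInf _).mpr fun hb => ?_
      rw [LinearMap.mem_eqLocus]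
      have := DFunLike.congr_fun (shear_comp_rename r a har b) Q
      simpa using this

lemma degree_eq_card_toMultiset {α : Type*} (d : α →₀ ℕ) :
    d.degree = Multiset.card (Finsupp.toMultiset d) := by
  rw [Finsupp.card_toMultiset]; rfl

noncomputable def homogSymEquiv (m k : ℕ) :
    {d : Fin (m + 1) →₀ ℕ // d.degree = k} ≃ Sym (Fin (m + 1)) k :=
  Equiv.subtypeEquiv (Multiset.toFinsupp (α := Fin (m + 1))).toEquiv.symm
    (by
      intro d
      show d.degree = k ↔ Multiset.card (Multiset.toFinsupp.symm d) = k
      rw [Multiset.toFinsupp_symm_apply, ← degree_eq_card_toMultiset])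

noncomputable instance homogFintype (m k : ℕ) :
    Fintype {d : Fin (m + 1) →₀ ℕ // d.degree = k} :=
  Fintype.ofEquiv _ (homogSymEquiv m k).symm

lemma finrank_homogeneousSubmodule (m k : ℕ) :
    Module.finrank ℂ ↥(homogeneousSubmodule (Fin (m + 1)) ℂ k) = (k + m).choose m := by
  have key : Module.finrank ℂ
      ↥(Finsupp.supported ℂ ℂ {d : Fin (m + 1) →₀ ℕ | d.degree = k}) = (k + m).choose m := by
    haveI : Fintype ↑{d : Fin (m + 1) →₀ ℕ | d.degree = k} := homogFintype m k
    rw [LinearEquiv.finrank_eq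
      (Finsupp.supportedEquivFinsupp (M := ℂ) (R := ℂ) {d : Fin (m + 1) →₀ ℕ | d.degree = k})]
    rw [Module.finrank_finsupp_self]
    have hc : Fintype.card {d : Fin (m + 1) →₀ ℕ | d.degree = k}
        = Fintype.card (Sym (Fin (m + 1)) k) := Fintype.card_congr (homogSymEquiv m k)
    rw [hc, Sym.card_sym_eq_choose, Fintype.card_fin]
    have h1 : m + 1 + k - 1 = k + m := by omega
    rw [h1, ← Nat.choose_symm (Nat.le_add_right k m)]
    congr 1
    omega
  rw [homogeneousSubmodule_eq_finsupp_supported]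
  rw [LinearEquiv.finrank_eq ((AddMonoidAlgebra.supportedEquivFinsupp (R := ℂ) (S := ℂ)
    {d : Fin (m + 1) →₀ ℕ | d.degree = k}).trans
    (Finsupp.supportedEquivFinsupp (M := ℂ) (R := ℂ) {d : Fin (m + 1) →₀ ℕ | d.degree = k}).symm)]
  exact key

/-- The ℂ-vector space of homogeneous degree-`k` polynomials in `ℂ[w_1, …, w_{r+1}]`
invariant under the shear `σ_b` for every `b` in a spanning subset `S ⊆ ℂ^{r-a}` has
dimension `C(k + a, a)`, the number of degree-`k` monomials in `a + 1` variables. -/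
theorem finrank_invariant_homogeneous
    (r a k : ℕ) (hr : 1 ≤ r) (har : a ≤ r)
    (S : Set (Fin (r - a) → ℂ))
    (hS : Submodule.span ℂ S = ⊤) :
    Module.finrank ℂ ↥(invariantHomogeneous r a k S) = (k + a).choose a := by
  rw [invariantHomogeneous_eq r a k har S hS]
  have hinj : Function.Injective
      ((rename (lastEmb r a har) : MvPolynomial (Fin (a + 1)) ℂ →ₐ[ℂ]
        MvPolynomial (Fin (r + 1)) ℂ).toLinearMap) := by
    have := rename_injective (R := ℂ) _ (lastEmb_injective r a har)
    exact this
  rw [← LinearEquiv.finrank_eq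
    (Submodule.equivMapOfInjective _ hinj (homogeneousSubmodule (Fin (a + 1)) ℂ k))]
  exact finrank_homogeneousSubmodule a k
end

section
/- Let G be a group, r ≥ 1 an integer, and ρ: G → GL(r+1, ℂ) a group homomorphism such that for every g ∈ G there is a vector b(g) = (b_1(g), …, b_r(g)) ∈ ℂ^r with ρ(g) = M(b(g)). Let a be the ℂ-dimension of the subspace W = {x ∈ ℂ^r : Σ_{i=1}^r b_i(g)·x_i = 0 for all g ∈ G}. Then there exist an invertible matrix Q ∈ GL(r+1, ℂ) and functions c_1, …, c_r : G → ℂ such that Q·ρ(g)·Q^{−1} = M(c_1(g), …, c_r(g)) for every g ∈ G, such that c_i(g) = 0 for every g ∈ G whenever i > r−a, and such that the vectors (c_1(g), …, c_{r−a}(g)), for g ranging over G, span ℂ^{r−a} as a ℂ-vector space. -/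
open Matrix

/-- The unipotent matrix `M(b) ∈ GL(r+1, ℂ)`: all diagonal entries `1`, entry `b_i` in
position `(i, r+1)` for `1 ≤ i ≤ r`, all other entries `0`. -/
noncomputable def uniMat (r : ℕ) (b : Fin r → ℂ) :
    Matrix (Fin (r + 1)) (Fin (r + 1)) ℂ := fun i j =>
  (if i = j then 1 else 0) +
  (if j = Fin.last r then (if h : (i : ℕ) < r then b ⟨(i : ℕ), h⟩ else 0) else 0)

/-- The subspace `W = {x ∈ ℂ^r : ∑ i, b_i(g) · x_i = 0 for all g ∈ G}`. -/
noncomputable def annihilatorSubspace {G : Type*} (r : ℕ) (b : G → Fin r → ℂ) :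
    Submodule ℂ (Fin r → ℂ) :=
  ⨅ g : G, LinearMap.ker
    (∑ i : Fin r, b g i • (LinearMap.proj i : (Fin r → ℂ) →ₗ[ℂ] ℂ))

open Module

theorem toDual_pi (r : ℕ) (v : Fin r → ℂ) :
    ((Pi.basisFun ℂ (Fin r)).toDual v : _ →ₗ[ℂ] ℂ)
      = ∑ i : Fin r, v i • (LinearMap.proj i : (Fin r → ℂ) →ₗ[ℂ] ℂ) := by
  apply (Pi.basisFun ℂ (Fin r)).ext
  intro i
  rw [Basis.toDual_apply_left, Pi.basisFun_repr]
  simp [LinearMap.sum_apply, Pi.basisFun_apply, Pi.single_apply]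

theorem dim_count {G : Type*} (r : ℕ) (b : G → Fin r → ℂ) :
    finrank ℂ (annihilatorSubspace r b)
      + finrank ℂ (Submodule.span ℂ (Set.range b)) = r := by
  set φ := (Pi.basisFun ℂ (Fin r)).toDualEquiv with hφ
  set U := Submodule.span ℂ (Set.range b) with hU
  set Φ := U.map (φ : (Fin r → ℂ) →ₗ[ℂ] Module.Dual ℂ (Fin r → ℂ)) with hΦ
  have key : ∀ v : Fin r → ℂ, ∀ x,
      (φ : (Fin r → ℂ) →ₗ[ℂ] Module.Dual ℂ (Fin r → ℂ)) v x = ∑ i, v i * x i := by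
    intro v x
    rw [show ((φ : (Fin r → ℂ) →ₗ[ℂ] Module.Dual ℂ (Fin r → ℂ)) v)
        = (Pi.basisFun ℂ (Fin r)).toDual v from rfl, toDual_pi]
    simp [LinearMap.sum_apply]
  have hW : annihilatorSubspace r b = Φ.dualCoannihilator := by
    ext x
    simp only [annihilatorSubspace, Submodule.mem_iInf, LinearMap.mem_ker,
      Submodule.mem_dualCoannihilator]
    have hsum : ∀ g : G, (∑ i : Fin r, b g i • (LinearMap.proj i : (Fin r → ℂ) →ₗ[ℂ] ℂ)) x
        = ∑ i, b g i * x i := by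
      intro g; simp [LinearMap.sum_apply]
    constructor
    · intro h f hf
      obtain ⟨u, hu, rfl⟩ := Submodule.mem_map.mp hf
      have hle : U ≤ LinearMap.ker ((LinearMap.applyₗ x).comp
          (φ : (Fin r → ℂ) →ₗ[ℂ] Module.Dual ℂ (Fin r → ℂ))) := by
        rw [hU]
        apply Submodule.span_le.mpr
        rintro _ ⟨g, rfl⟩
        simp only [SetLike.mem_coe, LinearMap.mem_ker, LinearMap.comp_apply,
          LinearMap.applyₗ_apply_apply]
        rw [key]
        have := h g; rwa [hsum g] at this
      have := hle hu
      simpa only [LinearMap.mem_ker, LinearMap.comp_apply,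
        LinearMap.applyₗ_apply_apply] using this
    · intro h g
      have : ((φ : (Fin r → ℂ) →ₗ[ℂ] Module.Dual ℂ (Fin r → ℂ)) (b g)) x = 0 :=
        h _ (Submodule.mem_map_of_mem (Submodule.subset_span ⟨g, rfl⟩))
      rw [key] at this
      rw [hsum g]; exact this
  have h2 := Subspace.finrank_add_finrank_dualCoannihilator_eq Φ
  have h3 : finrank ℂ Φ = finrank ℂ U :=
    (LinearEquiv.finrank_eq (Submodule.equivMapOfInjective _ φ.injective U)).symm
  have h4 : finrank ℂ (Fin r → ℂ) = r := by
    simp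
  rw [h4, h3] at h2
  rw [hW]
  omega


theorem exists_good_equiv {G : Type*} (r : ℕ) (b : G → Fin r → ℂ) (d : ℕ)
    (hd : finrank ℂ (Submodule.span ℂ (Set.range b)) = d) (hdr : d ≤ r) :
    ∃ A : (Fin r → ℂ) ≃ₗ[ℂ] (Fin r → ℂ),
      (∀ g, ∀ i : Fin r, d ≤ (i : ℕ) → A (b g) i = 0) ∧
      Submodule.span ℂ
        (Set.range fun g : G => fun j : Fin d => A (b g) (Fin.castLE hdr j)) = ⊤ := by
  set U := Submodule.span ℂ (Set.range b) with hU
  obtain ⟨U', hcompl⟩ := U.exists_isCompl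
  set e := finrank ℂ U' with he
  have hde : d + e = r := by
    have h1 := Submodule.finrank_add_eq_of_isCompl hcompl
    have h2 : finrank ℂ (Fin r → ℂ) = r := by simp
    omega
  let bU : Basis (Fin d) ℂ U := (finBasis ℂ U).reindex (finCongr hd)
  let bU' : Basis (Fin e) ℂ U' := finBasis ℂ U'
  let B : Basis (Fin d ⊕ Fin e) ℂ (Fin r → ℂ) :=
    (bU.prod bU').map (Submodule.prodEquivOfIsCompl U U' hcompl)
  let B' : Basis (Fin r) ℂ (Fin r → ℂ) := B.reindex (finSumFinEquiv.trans (finCongr hde))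
  refine ⟨B'.equivFun, ?_, ?_⟩
  · intro g i hi
    have hmem : b g ∈ U := Submodule.subset_span ⟨g, rfl⟩
    rw [Basis.equivFun_apply, Basis.repr_reindex_apply]
    have : (finSumFinEquiv.trans (finCongr hde)).symm i
        = Sum.inr ⟨(i : ℕ) - d, by omega⟩ := by
      apply (finSumFinEquiv.trans (finCongr hde)).injective
      simp only [Equiv.apply_symm_apply]
      apply Fin.ext
      simp [finSumFinEquiv_apply_right, Fin.natAdd]
      omega
    rw [this]
    have hsymm : (Submodule.prodEquivOfIsCompl U U' hcompl).symm (b g)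
        = ((⟨b g, hmem⟩ : U), (0 : U')) :=
      Submodule.prodEquivOfIsCompl_symm_apply_left (p := U) (q := U') hcompl (⟨b g, hmem⟩ : U)
    simp [B, Basis.map_repr, hsymm, Basis.prod_repr_inr]
  · have hmem : ∀ g, b g ∈ U := fun g => Submodule.subset_span ⟨g, rfl⟩
    have key : ∀ g (j : Fin d),
        B'.equivFun (b g) (Fin.castLE hdr j) = bU.equivFun ⟨b g, hmem g⟩ j := by
      intro g j
      rw [Basis.equivFun_apply, Basis.repr_reindex_apply]
      have : (finSumFinEquiv.trans (finCongr hde)).symm (Fin.castLE hdr j) = Sum.inl j := by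
        apply (finSumFinEquiv.trans (finCongr hde)).injective
        simp only [Equiv.apply_symm_apply]
        apply Fin.ext
        simp [finSumFinEquiv_apply_left]
      rw [this]
      have hsymm : (Submodule.prodEquivOfIsCompl U U' hcompl).symm (b g)
          = ((⟨b g, hmem g⟩ : U), (0 : U')) :=
        Submodule.prodEquivOfIsCompl_symm_apply_left (p := U) (q := U') hcompl
          (⟨b g, hmem g⟩ : U)
      simp [B, Basis.map_repr, hsymm, Basis.prod_repr_inl, Basis.equivFun_apply]
    have hfun : (fun g : G => fun j : Fin d => B'.equivFun (b g) (Fin.castLE hdr j))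
        = (fun g : G => bU.equivFun ⟨b g, hmem g⟩) := by
      funext g j; exact key g j
    rw [hfun]
    have hspanU : Submodule.span ℂ (Set.range fun g : G => (⟨b g, hmem g⟩ : U)) = ⊤ := by
      apply Submodule.map_injective_of_injective U.injective_subtype
      rw [Submodule.map_span, Submodule.map_subtype_top, ← Set.range_comp]
      exact hU.symm
    have : (fun g : G => bU.equivFun ⟨b g, hmem g⟩)
        = (bU.equivFun : U →ₗ[ℂ] (Fin d → ℂ)) ∘ (fun g => (⟨b g, hmem g⟩ : U)) := rfl
    rw [this, Set.range_comp, ← Submodule.map_span, hspanU, Submodule.map_top,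
      LinearMap.range_eq_top]
    exact (bU.equivFun : U ≃ₗ[ℂ] (Fin d → ℂ)).surjective

theorem uniMat_eq_blocks (r : ℕ) (v : Fin r → ℂ) :
    uniMat r v = Matrix.reindex finSumFinEquiv finSumFinEquiv
      (Matrix.fromBlocks 1 (Matrix.of fun i (_ : Fin 1) => v i) 0 1) := by
  ext i j
  obtain ⟨p, rfl⟩ := finSumFinEquiv.surjective i
  obtain ⟨q, rfl⟩ := finSumFinEquiv.surjective j
  rw [Matrix.reindex_apply, Matrix.submatrix_apply, Equiv.symm_apply_apply,
    Equiv.symm_apply_apply]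
  rcases p with p | p <;> rcases q with q | q <;>
    simp only [uniMat, finSumFinEquiv_apply_left, finSumFinEquiv_apply_right,
      Matrix.fromBlocks_apply₁₁, Matrix.fromBlocks_apply₁₂, Matrix.fromBlocks_apply₂₁,
      Matrix.fromBlocks_apply₂₂, Matrix.of_apply, Matrix.one_apply, Matrix.zero_apply,
      Fin.ext_iff, Fin.coe_castAdd, Fin.coe_natAdd, Fin.val_last] <;>
    [skip; skip; skip; skip]
  · have hq := q.isLt
    split_ifs <;> simp_all <;> omega
  · have hp := p.isLt
    have hq : (q : ℕ) = 0 := by omega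
    split_ifs <;> simp_all <;> try omega
  · have hq := q.isLt
    split_ifs <;> simp_all <;> omega
  · have hp : (p : ℕ) = 0 := by omega
    have hq : (q : ℕ) = 0 := by omega
    split_ifs <;> simp_all <;> omega

noncomputable def goodUnit (r : ℕ) (A : (Fin r → ℂ) ≃ₗ[ℂ] (Fin r → ℂ)) :
    (Matrix (Fin (r + 1)) (Fin (r + 1)) ℂ)ˣ where
  val := Matrix.reindexAlgEquiv ℂ ℂ finSumFinEquiv
    (Matrix.fromBlocks (LinearMap.toMatrix' (A : (Fin r → ℂ) →ₗ[ℂ] (Fin r → ℂ))) 0 0 1)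
  inv := Matrix.reindexAlgEquiv ℂ ℂ finSumFinEquiv
    (Matrix.fromBlocks (LinearMap.toMatrix' (A.symm : (Fin r → ℂ) →ₗ[ℂ] (Fin r → ℂ))) 0 0 1)
  val_inv := by
    rw [← _root_.map_mul, Matrix.fromBlocks_multiply]
    have : LinearMap.toMatrix' (A : (Fin r → ℂ) →ₗ[ℂ] (Fin r → ℂ)) *
        LinearMap.toMatrix' (A.symm : (Fin r → ℂ) →ₗ[ℂ] (Fin r → ℂ)) = 1 := by
      rw [← LinearMap.toMatrix'_comp, ← LinearMap.toMatrix'_id]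
      congr 1
      ext x
      simp
    simp [this, Matrix.fromBlocks_one]
  inv_val := by
    rw [← _root_.map_mul, Matrix.fromBlocks_multiply]
    have : LinearMap.toMatrix' (A.symm : (Fin r → ℂ) →ₗ[ℂ] (Fin r → ℂ)) *
        LinearMap.toMatrix' (A : (Fin r → ℂ) →ₗ[ℂ] (Fin r → ℂ)) = 1 := by
      rw [← LinearMap.toMatrix'_comp, ← LinearMap.toMatrix'_id]
      congr 1
      ext x
      simp
    simp [this, Matrix.fromBlocks_one]

theorem goodUnit_conj (r : ℕ) (A : (Fin r → ℂ) ≃ₗ[ℂ] (Fin r → ℂ)) (v : Fin r → ℂ) :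
    (goodUnit r A).val * uniMat r v * (goodUnit r A).inv = uniMat r (A v) := by
  rw [uniMat_eq_blocks, uniMat_eq_blocks]
  show (Matrix.reindexAlgEquiv ℂ ℂ finSumFinEquiv) _ *
      (Matrix.reindexAlgEquiv ℂ ℂ finSumFinEquiv) _ *
      (Matrix.reindexAlgEquiv ℂ ℂ finSumFinEquiv) _ = (Matrix.reindexAlgEquiv ℂ ℂ finSumFinEquiv) _
  rw [← _root_.map_mul, ← _root_.map_mul]
  congr 1
  rw [Matrix.fromBlocks_multiply, Matrix.fromBlocks_multiply]
  have hAA : LinearMap.toMatrix' (A : (Fin r → ℂ) →ₗ[ℂ] (Fin r → ℂ)) *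
      LinearMap.toMatrix' (A.symm : (Fin r → ℂ) →ₗ[ℂ] (Fin r → ℂ)) = 1 := by
    rw [← LinearMap.toMatrix'_comp, ← LinearMap.toMatrix'_id]
    congr 1
    ext x
    simp
  have hcol : LinearMap.toMatrix' (A : (Fin r → ℂ) →ₗ[ℂ] (Fin r → ℂ)) *
      (Matrix.of fun i (_ : Fin 1) => v i) = Matrix.of fun i (_ : Fin 1) => A v i := by
    ext i k
    have h2 : (LinearMap.toMatrix' (A : (Fin r → ℂ) →ₗ[ℂ] (Fin r → ℂ))).mulVec v = A v := by
      rw [← Matrix.toLin'_apply, Matrix.toLin'_toMatrix']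
      simp
    have h3 := congrFun h2 i
    simp [Matrix.mul_apply, Matrix.mulVec, dotProduct] at h3 ⊢
    exact h3
  simp [hAA, hcol]

/-- Given a representation `ρ : G → GL(r+1, ℂ)` whose image consists of unipotent matrices
`M(b(g))`, with `a = dim {x : ∑ b_i(g) x_i = 0 ∀ g}`, there is a change of basis `Q` after
which `ρ(g) = M(c_1(g), …, c_{r-a}(g), 0, …, 0)` where the vectors
`(c_1(g), …, c_{r-a}(g))` span `ℂ^{r-a}`. -/
theorem exists_good_basis_for_unipotent_rep
    {G : Type*} [Group G] (r : ℕ) (hr : 1 ≤ r)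
    (ρ : G →* Matrix.GeneralLinearGroup (Fin (r + 1)) ℂ)
    (b : G → Fin r → ℂ)
    (hρ : ∀ g : G, (ρ g : Matrix (Fin (r + 1)) (Fin (r + 1)) ℂ) = uniMat r (b g))
    (a : ℕ) (ha : a = Module.finrank ℂ ↥(annihilatorSubspace r b)) :
    ∃ Q : Matrix.GeneralLinearGroup (Fin (r + 1)) ℂ, ∃ c : G → Fin r → ℂ,
      (∀ g : G,
        (Q : Matrix (Fin (r + 1)) (Fin (r + 1)) ℂ) *
            (ρ g : Matrix (Fin (r + 1)) (Fin (r + 1)) ℂ) *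
            ((Q⁻¹ : Matrix.GeneralLinearGroup (Fin (r + 1)) ℂ) :
              Matrix (Fin (r + 1)) (Fin (r + 1)) ℂ)
          = uniMat r (c g)) ∧
      (∀ g : G, ∀ i : Fin r, r - a ≤ (i : ℕ) → c g i = 0) ∧
      Submodule.span ℂ
        (Set.range fun g : G => fun i : Fin (r - a) =>
          c g (Fin.castLE (Nat.sub_le r a) i)) = ⊤ := by
  have hcount := dim_count r b
  have hd : Module.finrank ℂ (Submodule.span ℂ (Set.range b)) = r - a := by omega
  have hdr : r - a ≤ r := Nat.sub_le r a
  obtain ⟨A, h1, h2⟩ := exists_good_equiv r b (r - a) hd hdr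
  refine ⟨goodUnit r A, fun g => A (b g), ?_, ?_, ?_⟩
  · intro g
    rw [hρ g]
    exact goodUnit_conj r A (b g)
  · exact fun g i hi => h1 g i hi
  · exact h2
end
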